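/- arXiv:1711.05567 — 6 statements merged into one kernel-verified Lean document; each statement's English description precedes it below -/
import Mathlib

section
/- Let ρ : L^∞(Ω, F_T, P) → L^∞(Ω, F_s, P) be monotone (X ≤ Y implies ρ(X) ≥ ρ(Y)) and F_s-translation invariant (ρ(X + f) = ρ(X) - f for all F_s-measurable bounded f). Then ρ is weakly F_s-homogeneous: for every A ∈ F_s and every X ∈ L^∞(F_T), 1_A · ρ(X) = 1_A · ρ(1_A · X) almost surely. -/
open MeasureTheory

/-- Membership in `L^∞` of a sub-σ-algebra: measurable and (uniformly) bounded. -/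
def MemLinf {Ω : Type*} (m : MeasurableSpace Ω) (X : Ω → ℝ) : Prop :=
  Measurable[m] X ∧ ∃ C : ℝ, ∀ ω, |X ω| ≤ C

/-- a monotone, `F_s`-translation invariant map
`ρ : L^∞(F_T) → L^∞(F_s)` is weakly `F_s`-homogeneous. -/
theorem stmt0 {Ω : Type*} {m0 : MeasurableSpace Ω} (P : Measure Ω) [IsProbabilityMeasure P]
    (ms mT : MeasurableSpace Ω) (hst : ms ≤ mT) (hT : mT ≤ m0)
    (ρ : (Ω → ℝ) → (Ω → ℝ))
    (hmaps : ∀ X : Ω → ℝ, MemLinf mT X → MemLinf ms (ρ X))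
    (hmono : ∀ X Y : Ω → ℝ, MemLinf mT X → MemLinf mT Y →
      (∀ᵐ ω ∂P, X ω ≤ Y ω) → ∀ᵐ ω ∂P, ρ Y ω ≤ ρ X ω)
    (htrans : ∀ X f : Ω → ℝ, MemLinf mT X → MemLinf ms f →
      ρ (X + f) =ᵐ[P] ρ X - f)
    (A : Set Ω) (hA : MeasurableSet[ms] A)
    (X : Ω → ℝ) (hX : MemLinf mT X) :
    (fun ω => A.indicator (fun _ => (1 : ℝ)) ω * ρ X ω)
      =ᵐ[P] fun ω => A.indicator (fun _ => (1 : ℝ)) ω *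
        ρ (fun ω' => A.indicator (fun _ => (1 : ℝ)) ω' * X ω') ω := by
  obtain ⟨hXm, C, hC⟩ := hX
  set C' := max C 0 with hC'def
  have hC'0 : 0 ≤ C' := le_max_right _ _
  have hbX : ∀ ω, |X ω| ≤ C' := fun ω => (hC ω).trans (le_max_left _ _)
  set f : Ω → ℝ := (Aᶜ).indicator (fun _ => C') with hfdef
  have hfb : ∀ ω, |f ω| ≤ C' := by
    intro ω
    by_cases h : ω ∈ Aᶜ <;> simp [hfdef, Set.indicator_apply, h, abs_of_nonneg hC'0, hC'0]
  have hfmem : MemLinf ms f := ⟨measurable_const.indicator hA.compl, C', hfb⟩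
  set Y : Ω → ℝ := fun ω => A.indicator (fun _ => (1 : ℝ)) ω * X ω with hYdef
  have hbY : ∀ ω, |Y ω| ≤ C' := by
    intro ω
    by_cases h : ω ∈ A <;> simp [hYdef, Set.indicator_apply, h, hbX ω, hC'0]
  have hYmem : MemLinf mT Y :=
    ⟨(measurable_const.indicator (hst _ hA)).mul hXm, C', hbY⟩
  have hXmem : MemLinf mT X := ⟨hXm, C, hC⟩
  have hfmT : Measurable[mT] f := hfmem.1.mono hst le_rfl
  have hXfmem : MemLinf mT (X + f) :=
    ⟨hXm.add hfmT, C' + C', fun ω =>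
      (abs_add_le _ _).trans (add_le_add (hbX ω) (hfb ω))⟩
  have hYfmem : MemLinf mT (Y + f) :=
    ⟨hYmem.1.add hfmT, C' + C', fun ω =>
      (abs_add_le _ _).trans (add_le_add (hbY ω) (hfb ω))⟩
  have ineq1 : ∀ ω, Y ω ≤ (X + f) ω := by
    intro ω
    by_cases h : ω ∈ A
    · simp [hYdef, hfdef, Set.indicator_apply, h]
    · have := abs_le.mp (hbX ω)
      simp only [hYdef, hfdef, Set.indicator_apply, h, if_neg h, Pi.add_apply]
      simp [h]
      linarith [this.1]
  have ineq2 : ∀ ω, X ω ≤ (Y + f) ω := by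
    intro ω
    by_cases h : ω ∈ A
    · simp [hYdef, hfdef, Set.indicator_apply, h]
    · have := abs_le.mp (hbX ω)
      simp only [hYdef, hfdef, Set.indicator_apply, Pi.add_apply]
      simp [h]
      linarith [this.2]
  have h1 : ∀ᵐ ω ∂P, ρ (X + f) ω ≤ ρ Y ω :=
    hmono Y (X + f) hYmem hXfmem (Filter.Eventually.of_forall ineq1)
  have h2 : ∀ᵐ ω ∂P, ρ (Y + f) ω ≤ ρ X ω :=
    hmono X (Y + f) hXmem hYfmem (Filter.Eventually.of_forall ineq2)
  have e1 := htrans X f hXmem hfmem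
  have e2 := htrans Y f hYmem hfmem
  filter_upwards [h1, h2, e1, e2] with ω h1 h2 e1 e2
  by_cases h : ω ∈ A
  · have hf0 : f ω = 0 := by simp [hfdef, Set.indicator_apply, h]
    simp only [Pi.sub_apply, hf0, sub_zero] at e1 e2
    rw [e1] at h1
    rw [e2] at h2
    rw [Set.indicator_of_mem h, one_mul, one_mul, le_antisymm h1 h2]
  · rw [Set.indicator_of_notMem h]
    ring
end

section
/- Let ρ_{st} : L^p(F_t) → L^p(F_s) be monotone and F_s-translation invariant. Then time-consistency of the family (ρ_{st}) is equivalent to the order-preserving property: for all r ≤ s ≤ t and all X, Y ∈ L^p(F_t), ρ_{st}(X) ≥ ρ_{st}(Y) a.s. implies ρ_{rt}(X) ≥ ρ_{rt}(Y) a.s. -/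
open MeasureTheory
open scoped ENNReal

/-- Membership in `L^p` of a sub-σ-algebra. -/
def MemLpF {Ω : Type*} (m : MeasurableSpace Ω) {m' : MeasurableSpace Ω} (p : ℝ≥0∞)
    (P : Measure Ω) (X : Ω → ℝ) : Prop :=
  Measurable[m] X ∧ MeasureTheory.MemLp X p P

namespace MemLpF

variable {Ω : Type*} {m m' : MeasurableSpace Ω} {m0 : MeasurableSpace Ω} {p : ℝ≥0∞}
  {P : Measure Ω} {X Y : Ω → ℝ}

theorem add (hX : MemLpF m p P X) (hY : MemLpF m p P Y) : MemLpF m p P (X + Y) :=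
  ⟨hX.1.add hY.1, hX.2.add hY.2⟩

theorem sub (hX : MemLpF m p P X) (hY : MemLpF m p P Y) : MemLpF m p P (X - Y) :=
  ⟨hX.1.sub hY.1, hX.2.sub hY.2⟩

theorem mono (hm : m ≤ m') (hX : MemLpF m p P X) : MemLpF m' p P X :=
  ⟨hX.1.mono hm le_rfl, hX.2⟩

end MemLpF

section TwoLevels

variable {Ω : Type*} {m0 : MeasurableSpace Ω} {P : Measure Ω} {p : ℝ≥0∞}
  {mₛ mₜ : MeasurableSpace Ω} {ρₛ ρᵣ : (Ω → ℝ) → Ω → ℝ}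

/-- Translating `X` by the `mₛ`-measurable gap `ρₛ X - ρₛ Y` makes its risk equal to that of
`Y`; consistency transfers this equality to `ρᵣ`, and monotonicity of `ρᵣ` compares the
translate with `X` itself. -/
theorem ae_le_of_ae_le_of_consistent (hm : mₛ ≤ mₜ)
    (hmaps : ∀ X, MemLpF mₜ p P X → MemLpF mₛ p P (ρₛ X))
    (hmono : ∀ X Y, MemLpF mₜ p P X → MemLpF mₜ p P Y → Y ≤ᵐ[P] X → ρᵣ X ≤ᵐ[P] ρᵣ Y)
    (htrans : ∀ X f, MemLpF mₜ p P X → MemLpF mₛ p P f → ρₛ (X + f) =ᵐ[P] ρₛ X - f)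
    (hcons : ∀ X Y, MemLpF mₜ p P X → MemLpF mₜ p P Y → ρₛ X =ᵐ[P] ρₛ Y → ρᵣ X =ᵐ[P] ρᵣ Y)
    {X Y : Ω → ℝ} (hX : MemLpF mₜ p P X) (hY : MemLpF mₜ p P Y) (hle : ρₛ Y ≤ᵐ[P] ρₛ X) :
    ρᵣ Y ≤ᵐ[P] ρᵣ X := by
  set f := ρₛ X - ρₛ Y
  have hf : MemLpF mₛ p P f := (hmaps X hX).sub (hmaps Y hY)
  have hXf : MemLpF mₜ p P (X + f) := hX.add (hf.mono hm)
  have hshift : ρₛ (X + f) =ᵐ[P] ρₛ Y :=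
    (htrans X f hX hf).trans (.of_eq (sub_sub_cancel _ _))
  have hX_le : X ≤ᵐ[P] X + f := by
    filter_upwards [hle] with ω hω
    simpa [f] using hω
  exact (hcons _ _ hXf hY hshift).symm.trans_le (hmono _ _ hXf hX hX_le)

end TwoLevels

theorem stmt4_general {Ω : Type*} {m0 : MeasurableSpace Ω} (P : Measure Ω)
    (T : ℝ) (p : ℝ≥0∞)
    (F : ℝ → MeasurableSpace Ω) (hFmono : ∀ s t, s ≤ t → F s ≤ F t)
    (ρ : ℝ → ℝ → (Ω → ℝ) → (Ω → ℝ))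
    (hmaps : ∀ s t, 0 ≤ s → s ≤ t → t ≤ T →
      ∀ X : Ω → ℝ, MemLpF (F t) p P X → MemLpF (F s) p P (ρ s t X))
    (hmono : ∀ s t, 0 ≤ s → s ≤ t → t ≤ T →
      ∀ X Y : Ω → ℝ, MemLpF (F t) p P X → MemLpF (F t) p P Y →
        (∀ᵐ ω ∂P, Y ω ≤ X ω) → ∀ᵐ ω ∂P, ρ s t X ω ≤ ρ s t Y ω)
    (htrans : ∀ s t, 0 ≤ s → s ≤ t → t ≤ T →
      ∀ X f : Ω → ℝ, MemLpF (F t) p P X → MemLpF (F s) p P f →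
        ρ s t (X + f) =ᵐ[P] ρ s t X - f) :
    (∀ r s t, 0 ≤ r → r ≤ s → s ≤ t → t ≤ T →
        ∀ X Y : Ω → ℝ, MemLpF (F t) p P X → MemLpF (F t) p P Y →
          ρ s t X =ᵐ[P] ρ s t Y → ρ r t X =ᵐ[P] ρ r t Y)
      ↔
    (∀ r s t, 0 ≤ r → r ≤ s → s ≤ t → t ≤ T →
        ∀ X Y : Ω → ℝ, MemLpF (F t) p P X → MemLpF (F t) p P Y →
          (∀ᵐ ω ∂P, ρ s t Y ω ≤ ρ s t X ω) → ∀ᵐ ω ∂P, ρ r t Y ω ≤ ρ r t X ω) := by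
  constructor
  · intro hcons r s t hr hrs hst htT X Y hX hY
    have hs : 0 ≤ s := hr.trans hrs
    exact ae_le_of_ae_le_of_consistent (hFmono s t hst) (hmaps s t hs hst htT)
      (hmono r t hr (hrs.trans hst) htT) (htrans s t hs hst htT)
      (hcons r s t hr hrs hst htT) hX hY
  · intro hord r s t hr hrs hst htT X Y hX hY heq
    exact Filter.EventuallyLE.antisymm (hord r s t hr hrs hst htT Y X hY hX heq.le)
      (hord r s t hr hrs hst htT X Y hX hY heq.symm.le)

/-- for a monotone, `F_s`-translation invariant fully-dynamic
family `(ρ_{st})`, time-consistency is equivalent to the order-preserving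
property. -/
theorem stmt4 {Ω : Type*} {m0 : MeasurableSpace Ω} (P : Measure Ω) [IsProbabilityMeasure P]
    (T : ℝ) (hT : 0 ≤ T) (p : ℝ≥0∞) (hp : 1 ≤ p)
    (F : ℝ → MeasurableSpace Ω) (hFmono : ∀ s t, s ≤ t → F s ≤ F t)
    (hFle : ∀ t, F t ≤ m0)
    (ρ : ℝ → ℝ → (Ω → ℝ) → (Ω → ℝ))
    (hmaps : ∀ s t, 0 ≤ s → s ≤ t → t ≤ T →
      ∀ X : Ω → ℝ, MemLpF (F t) p P X → MemLpF (F s) p P (ρ s t X))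
    (hmono : ∀ s t, 0 ≤ s → s ≤ t → t ≤ T →
      ∀ X Y : Ω → ℝ, MemLpF (F t) p P X → MemLpF (F t) p P Y →
        (∀ᵐ ω ∂P, Y ω ≤ X ω) → ∀ᵐ ω ∂P, ρ s t X ω ≤ ρ s t Y ω)
    (htrans : ∀ s t, 0 ≤ s → s ≤ t → t ≤ T →
      ∀ X f : Ω → ℝ, MemLpF (F t) p P X → MemLpF (F s) p P f →
        ρ s t (X + f) =ᵐ[P] ρ s t X - f) :
    (∀ r s t, 0 ≤ r → r ≤ s → s ≤ t → t ≤ T →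
        ∀ X Y : Ω → ℝ, MemLpF (F t) p P X → MemLpF (F t) p P Y →
          ρ s t X =ᵐ[P] ρ s t Y → ρ r t X =ᵐ[P] ρ r t Y)
      ↔
    (∀ r s t, 0 ≤ r → r ≤ s → s ≤ t → t ≤ T →
        ∀ X Y : Ω → ℝ, MemLpF (F t) p P X → MemLpF (F t) p P Y →
          (∀ᵐ ω ∂P, ρ s t Y ω ≤ ρ s t X ω) → ∀ᵐ ω ∂P, ρ r t Y ω ≤ ρ r t X ω) :=
  stmt4_general (m0 := m0) P T p F hFmono ρ hmaps hmono htrans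
end

section
/- Let p ∈ [1,∞), let ρ : L^p(Ω, F, P) → ℝ be convex and monotone decreasing (X ≥ Y implies ρ(X) ≤ ρ(Y)) with translation invariance ρ(X + c) = ρ(X) − c for constants c. Suppose there exist K > 0 and C ∈ ℝ with ρ(X) ≤ K‖X‖_p + C for all X ∈ L^p. If Q is a probability measure absolutely continuous with respect to P whose penalty α(Q) := sup_{X ∈ L^p}(E_Q[−X] − ρ(X)) is finite, then E_Q[X] ≤ K‖X‖_p for all X ∈ L^p; consequently dQ/dP ∈ L^q with ‖dQ/dP‖_q ≤ K, where q = p/(p−1). -/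
open MeasureTheory Filter
open scoped ENNReal

/-!
Applying the penalty bound to `-t • X` and the growth bound to `ρ (-t • X)` gives
`t E_Q[X] ≤ t K ‖X‖_p + C + α` for every `t > 0`; dividing by `t` and letting `t → ∞` yields
`E_Q[X] ≤ K ‖X‖_p`. For bounded `g` this reads `∫ (dQ/dP) |g| dP ≤ K ‖g‖_p`, and the converse of
Hölder's inequality turns it into `‖dQ/dP‖_q ≤ K`: for `q < ∞` test against `min(dQ/dP, n) ^ (q - 1)`
and let `n → ∞`, for `q = ∞` test against indicators.
-/

theorem le_of_forall_pos_mul_le_mul_add {a b D : ℝ} (h : ∀ t > 0, t * a ≤ t * b + D) : a ≤ b := by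
  by_contra! hba
  have hpos : 0 < a - b := sub_pos.2 hba
  have ht := h ((|D| + 1) / (a - b)) (by positivity)
  have hcancel : (|D| + 1) / (a - b) * (a - b) = |D| + 1 := div_mul_cancel₀ _ hpos.ne'
  nlinarith [le_abs_self D]

theorem integral_le_mul_eLpNorm_of_penalty_le {Ω : Type*} {m0 : MeasurableSpace Ω}
    {P Q : Measure Ω} {p : ℝ≥0∞} {ρ : (Ω → ℝ) → ℝ} {K C α : ℝ}
    (hgrowth : ∀ X : Ω → ℝ, MemLp X p P → ρ X ≤ K * (eLpNorm X p P).toReal + C)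
    (hα : ∀ X : Ω → ℝ, MemLp X p P → (∫ ω, -X ω ∂Q) - ρ X ≤ α)
    {X : Ω → ℝ} (hX : MemLp X p P) :
    ∫ ω, X ω ∂Q ≤ K * (eLpNorm X p P).toReal := by
  refine le_of_forall_pos_mul_le_mul_add (D := C + α) fun t ht => ?_
  have htX : MemLp (-t • X) p P := hX.const_smul (-t)
  have hnorm : (eLpNorm (-t • X) p P).toReal = t * (eLpNorm X p P).toReal := by
    rw [eLpNorm_const_smul, ENNReal.toReal_mul, toReal_enorm, Real.norm_eq_abs, abs_neg,
      abs_of_pos ht]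
  have hint : ∫ ω, -(-t • X) ω ∂Q = t * ∫ ω, X ω ∂Q := by
    simp only [Pi.smul_apply, smul_eq_mul, neg_mul, neg_neg]
    exact integral_const_mul t X
  have hpenalty := hα _ htX
  have hgrowth_t := hgrowth _ htX
  rw [hint] at hpenalty
  rw [hnorm] at hgrowth_t
  linarith

theorem ENNReal.le_of_rpow_le_mul_rpow_sub_one {x c : ℝ≥0∞} {s : ℝ} (hx : x ≠ ∞)
    (h : x ^ s ≤ c * x ^ (s - 1)) : x ≤ c := by
  rcases eq_or_ne x 0 with rfl | hx0
  · exact zero_le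
  have hsplit : x ^ s = x * x ^ (s - 1) := by
    conv_lhs => rw [← add_sub_cancel 1 s]
    rw [ENNReal.rpow_add _ _ hx0 hx, ENNReal.rpow_one]
  rw [hsplit] at h
  exact (ENNReal.mul_le_mul_iff_left (ENNReal.rpow_pos (pos_iff_ne_zero.2 hx0) hx).ne'
    (ENNReal.rpow_ne_top_of_ne_zero hx0 hx)).1 h

section ConverseHolder

variable {α E : Type*} {m : MeasurableSpace α} {μ : Measure α} [NormedAddCommGroup E]
  {f : α → E} {c : ℝ≥0∞}

theorem eLpNorm_top_le_of_forall_lintegral_mul_le [SigmaFinite μ] (hf : AEStronglyMeasurable f μ)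
    (hdual : ∀ g : α → ℝ, MemLp g ∞ μ → ∫⁻ a, ‖f a‖ₑ * ‖g a‖ₑ ∂μ ≤ c * eLpNorm g 1 μ) :
    eLpNorm f ∞ μ ≤ c := by
  rw [eLpNorm_exponent_top]
  refine eLpNormEssSup_le_of_ae_enorm_bound
    (ae_le_of_forall_setLIntegral_le_of_sigmaFinite₀ hf.enorm fun s hs hμs => ?_)
  calc ∫⁻ a in s, ‖f a‖ₑ ∂μ = ∫⁻ a, ‖f a‖ₑ * ‖s.indicator (fun _ => (1 : ℝ)) a‖ₑ ∂μ := by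
        rw [← lintegral_indicator hs]
        congr 1 with a
        by_cases ha : a ∈ s <;> simp [ha]
    _ ≤ c * eLpNorm (s.indicator fun _ => (1 : ℝ)) 1 μ :=
        hdual _ (memLp_indicator_const ∞ hs 1 (Or.inr hμs.ne))
    _ = ∫⁻ _ in s, c ∂μ := by
        rw [eLpNorm_indicator_const hs one_ne_zero ENNReal.one_ne_top, setLIntegral_const]
        simp

theorem eLpNorm_one_le_of_forall_lintegral_mul_le
    (hdual : ∀ g : α → ℝ, MemLp g ∞ μ → ∫⁻ a, ‖f a‖ₑ * ‖g a‖ₑ ∂μ ≤ c * eLpNorm g ∞ μ) :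
    eLpNorm f 1 μ ≤ c := by
  have hone : eLpNorm (fun _ => (1 : ℝ)) ∞ μ ≤ 1 := by
    simpa using eLpNormEssSup_le_of_ae_bound (μ := μ) (f := fun _ => (1 : ℝ)) (C := 1) (by simp)
  calc eLpNorm f 1 μ = ∫⁻ a, ‖f a‖ₑ * ‖(1 : ℝ)‖ₑ ∂μ := by simp [eLpNorm_one_eq_lintegral_enorm]
    _ ≤ c * eLpNorm (fun _ => (1 : ℝ)) ∞ μ := hdual _ (memLp_top_const 1)
    _ ≤ c := mul_le_of_le_one_right' hone

theorem eLpNorm_le_of_forall_lintegral_mul_le_of_bounded [IsFiniteMeasure μ] {p q : ℝ≥0∞}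
    [p.HolderConjugate q] (hp : p ≠ ∞) (hq : q ≠ ∞) {h : α → ℝ} (hh : AEStronglyMeasurable h μ)
    {B : ℝ} (hB : ∀ a, ‖h a‖ ≤ B) (hhf : ∀ a, ‖h a‖ₑ ≤ ‖f a‖ₑ)
    (hdual : ∀ g : α → ℝ, MemLp g ∞ μ → ∫⁻ a, ‖f a‖ₑ * ‖g a‖ₑ ∂μ ≤ c * eLpNorm g p μ) :
    eLpNorm h q μ ≤ c := by
  have hpq : p.toReal.HolderConjugate q.toReal := ENNReal.HolderConjugate.toReal_of_ne_top hp hq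
  set s := q.toReal
  have hs1 : 0 < s - 1 := hpq.symm.sub_one_pos
  have hexp : p * ENNReal.ofReal (s - 1) = q := by
    rw [← ENNReal.ofReal_toReal hp, ← ENNReal.ofReal_mul ENNReal.toReal_nonneg, mul_comm,
      hpq.symm.sub_one_mul_conj, ENNReal.ofReal_toReal hq]
  set g : α → ℝ := fun a => ‖h a‖ ^ (s - 1)
  have hg : MemLp g ∞ μ := by
    refine memLp_top_of_bound (hh.norm.aemeasurable.pow_const _).aestronglyMeasurable
      (B ^ (s - 1)) (ae_of_all _ fun a => ?_)
    rw [Real.norm_of_nonneg (by positivity)]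
    exact Real.rpow_le_rpow (norm_nonneg _) (hB a) hs1.le
  have hfin : eLpNorm h q μ ≠ ∞ :=
    ((memLp_top_of_bound hh B (ae_of_all _ hB)).mono_exponent le_top).eLpNorm_ne_top
  refine ENNReal.le_of_rpow_le_mul_rpow_sub_one (s := s) hfin ?_
  calc eLpNorm h q μ ^ s = ∫⁻ a, ‖h a‖ₑ ^ s ∂μ := by
        rw [eLpNorm_eq_eLpNorm' (ENNReal.HolderConjugate.ne_zero q p) hq,
          lintegral_rpow_enorm_eq_rpow_eLpNorm' (by linarith)]
    _ ≤ ∫⁻ a, ‖f a‖ₑ * ‖g a‖ₑ ∂μ := lintegral_mono fun a => by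
        rw [Real.enorm_rpow_of_nonneg (norm_nonneg _) hs1.le, enorm_norm]
        conv_lhs => rw [← add_sub_cancel 1 s]
        rw [ENNReal.rpow_add_of_nonneg _ _ zero_le_one hs1.le, ENNReal.rpow_one]
        gcongr
        exact hhf a
    _ ≤ c * eLpNorm g p μ := hdual g hg
    _ = c * eLpNorm h q μ ^ (s - 1) := by rw [eLpNorm_norm_rpow _ hs1, hexp]

theorem eLpNorm_le_of_forall_lintegral_mul_le_of_ne_top [IsFiniteMeasure μ] {p q : ℝ≥0∞}
    [p.HolderConjugate q] (hp : p ≠ ∞) (hq : q ≠ ∞) (hf : AEStronglyMeasurable f μ)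
    (hdual : ∀ g : α → ℝ, MemLp g ∞ μ → ∫⁻ a, ‖f a‖ₑ * ‖g a‖ₑ ∂μ ≤ c * eLpNorm g p μ) :
    eLpNorm f q μ ≤ c := by
  set trunc : ℕ → α → ℝ := fun n a => min ‖f a‖ n
  have htrunc_meas (n : ℕ) : AEStronglyMeasurable (trunc n) μ :=
    (hf.norm.aemeasurable.min aemeasurable_const).aestronglyMeasurable
  have htrunc_nonneg (n : ℕ) (a : α) : 0 ≤ trunc n a := le_min (norm_nonneg _) n.cast_nonneg
  have hbound (n : ℕ) : eLpNorm (trunc n) q μ ≤ c := by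
    refine eLpNorm_le_of_forall_lintegral_mul_le_of_bounded hp hq (htrunc_meas n) (B := n)
      (fun a => ?_) (fun a => ?_) hdual
    · rw [Real.norm_of_nonneg (htrunc_nonneg n a)]
      exact min_le_right _ _
    · rw [← ofReal_norm, ← ofReal_norm, Real.norm_of_nonneg (htrunc_nonneg n a)]
      exact ENNReal.ofReal_le_ofReal (min_le_left _ _)
  calc eLpNorm f q μ = eLpNorm (fun a => ‖f a‖) q μ := (eLpNorm_norm f).symm
    _ ≤ atTop.liminf fun n => eLpNorm (trunc n) q μ :=
        Lp.eLpNorm_lim_le_liminf_eLpNorm htrunc_meas _ (ae_of_all _ fun a =>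
          tendsto_const_nhds.congr' ((eventually_ge_atTop ⌈‖f a‖⌉₊).mono fun n hn =>
            (min_eq_left ((Nat.le_ceil _).trans (Nat.cast_le.2 hn))).symm))
    _ ≤ c := liminf_le_of_frequently_le' (Frequently.of_forall hbound)

theorem eLpNorm_le_of_forall_lintegral_mul_le [IsFiniteMeasure μ] {p q : ℝ≥0∞}
    [p.HolderConjugate q] (hf : AEStronglyMeasurable f μ)
    (hdual : ∀ g : α → ℝ, MemLp g ∞ μ → ∫⁻ a, ‖f a‖ₑ * ‖g a‖ₑ ∂μ ≤ c * eLpNorm g p μ) :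
    eLpNorm f q μ ≤ c := by
  by_cases hq : q = ∞
  · obtain rfl : p = 1 := (ENNReal.HolderConjugate.eq_top_iff_eq_one q p).1 hq
    exact hq ▸ eLpNorm_top_le_of_forall_lintegral_mul_le hf hdual
  by_cases hp : p = ∞
  · obtain rfl : q = 1 := (ENNReal.HolderConjugate.eq_top_iff_eq_one p q).1 hp
    exact eLpNorm_one_le_of_forall_lintegral_mul_le (hp ▸ hdual)
  exact eLpNorm_le_of_forall_lintegral_mul_le_of_ne_top hp hq hf hdual

end ConverseHolder

theorem lintegral_enorm_toReal_rnDeriv_mul {α : Type*} {m : MeasurableSpace α} {μ ν : Measure α}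
    [SigmaFinite μ] [μ.HaveLebesgueDecomposition ν] (hμν : μ ≪ ν) {g : α → ℝ≥0∞}
    (hg : AEMeasurable g ν) :
    ∫⁻ a, ‖(μ.rnDeriv ν a).toReal‖ₑ * g a ∂ν = ∫⁻ a, g a ∂μ := by
  rw [← lintegral_rnDeriv_mul hμν hg]
  refine lintegral_congr_ae ((Measure.rnDeriv_lt_top μ ν).mono fun a ha => ?_)
  simp only [Real.enorm_toReal ha.ne]

theorem lintegral_enorm_le_of_forall_integral_le {α : Type*} {m : MeasurableSpace α}
    {P Q : Measure α} [IsFiniteMeasure P] [IsFiniteMeasure Q] (hQP : Q ≪ P) {p : ℝ≥0∞} {K : ℝ}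
    (h : ∀ X : α → ℝ, MemLp X p P → ∫ a, X a ∂Q ≤ K * (eLpNorm X p P).toReal)
    {g : α → ℝ} (hg : MemLp g ∞ P) :
    ∫⁻ a, ‖g a‖ₑ ∂Q ≤ ENNReal.ofReal K * eLpNorm g p P := by
  have hgQ : MemLp g ∞ Q := ⟨hg.1.mono_ac hQP, (eLpNormEssSup_mono_measure g hQP).trans_lt hg.2⟩
  have hgp : MemLp g p P := hg.mono_exponent le_top
  calc ∫⁻ a, ‖g a‖ₑ ∂Q = ENNReal.ofReal (∫ a, ‖g a‖ ∂Q) :=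
        (ofReal_integral_norm_eq_lintegral_enorm (hgQ.integrable le_top)).symm
    _ ≤ ENNReal.ofReal (K * (eLpNorm g p P).toReal) := by
        gcongr
        simpa only [eLpNorm_norm] using h _ hgp.norm
    _ = ENNReal.ofReal K * eLpNorm g p P := by
        rw [ENNReal.ofReal_mul' ENNReal.toReal_nonneg, ENNReal.ofReal_toReal hgp.eLpNorm_ne_top]

theorem stmt5_general {Ω : Type*} {m0 : MeasurableSpace Ω} (P : Measure Ω) [IsProbabilityMeasure P]
    (p q : ℝ≥0∞) (hpq : 1 / p + 1 / q = 1)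
    (ρ : (Ω → ℝ) → ℝ)
    (K C : ℝ)
    (hgrowth : ∀ X : Ω → ℝ, MemLp X p P → ρ X ≤ K * (eLpNorm X p P).toReal + C)
    (Q : Measure Ω) [IsProbabilityMeasure Q] (hQP : Q ≪ P)
    (α : ℝ) (hα : ∀ X : Ω → ℝ, MemLp X p P → (∫ ω, -X ω ∂Q) - ρ X ≤ α) :
    (∀ X : Ω → ℝ, MemLp X p P → ∫ ω, X ω ∂Q ≤ K * (eLpNorm X p P).toReal) ∧
    eLpNorm (fun ω => (Q.rnDeriv P ω).toReal) q P ≤ ENNReal.ofReal K := by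
  have hexpect (X : Ω → ℝ) (hX : MemLp X p P) : ∫ ω, X ω ∂Q ≤ K * (eLpNorm X p P).toReal :=
    integral_le_mul_eLpNorm_of_penalty_le hgrowth hα hX
  refine ⟨hexpect, ?_⟩
  have : p.HolderConjugate q := ENNReal.holderConjugate_iff.2 (by simpa only [one_div] using hpq)
  refine eLpNorm_le_of_forall_lintegral_mul_le (p := p)
    (Q.measurable_rnDeriv P).ennreal_toReal.aestronglyMeasurable fun g hg => ?_
  rw [lintegral_enorm_toReal_rnDeriv_mul hQP hg.1.enorm]
  exact lintegral_enorm_le_of_forall_integral_le hQP hexpect hg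

/-- a convex, monotone, translation-invariant `ρ : L^p → ℝ` with
growth bound `ρ(X) ≤ K‖X‖_p + C`; if `Q ≪ P` has finite penalty then
`E_Q[X] ≤ K‖X‖_p` for all `X ∈ L^p`, and `‖dQ/dP‖_q ≤ K`. -/
theorem stmt5 {Ω : Type*} {m0 : MeasurableSpace Ω} (P : Measure Ω) [IsProbabilityMeasure P]
    (p q : ℝ≥0∞) (hp : 1 ≤ p) (hp' : p ≠ ∞) (hpq : 1 / p + 1 / q = 1)
    (ρ : (Ω → ℝ) → ℝ)
    (hconv : ∀ (X Y : Ω → ℝ) (l : ℝ), MemLp X p P → MemLp Y p P → 0 ≤ l → l ≤ 1 →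
      ρ (fun ω => l * X ω + (1 - l) * Y ω) ≤ l * ρ X + (1 - l) * ρ Y)
    (hmono : ∀ X Y : Ω → ℝ, MemLp X p P → MemLp Y p P →
      (∀ᵐ ω ∂P, Y ω ≤ X ω) → ρ X ≤ ρ Y)
    (htrans : ∀ (X : Ω → ℝ) (c : ℝ), MemLp X p P → ρ (fun ω => X ω + c) = ρ X - c)
    (K C : ℝ) (hK : 0 < K)
    (hgrowth : ∀ X : Ω → ℝ, MemLp X p P → ρ X ≤ K * (eLpNorm X p P).toReal + C)
    (Q : Measure Ω) [IsProbabilityMeasure Q] (hQP : Q ≪ P)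
    (α : ℝ) (hα : ∀ X : Ω → ℝ, MemLp X p P → (∫ ω, -X ω ∂Q) - ρ X ≤ α) :
    (∀ X : Ω → ℝ, MemLp X p P → ∫ ω, X ω ∂Q ≤ K * (eLpNorm X p P).toReal) ∧
    eLpNorm (fun ω => (Q.rnDeriv P ω).toReal) q P ≤ ENNReal.ofReal K :=
  stmt5_general (m0 := m0) P p q hpq ρ K C hgrowth Q hQP α hα
end

section
/- Let Q₀, Q₁ be probability measures with Q₁ ≪ P, Q₁ restricted to F_s equal to P restricted to F_s, and (dQ₁/dP) ∈ L²(F_t) of the form 1 + h with E[h | F_s] = 0 and E[h² | F_s] ≤ δ₁², and similarly Q₂ on F_u ⊇ F_t with density relative to F_t of the form 1 + h' where E[h' | F_t] = 0 and E[h'² | F_t] ≤ δ₂². Then the composed (pasted) measure Q defined by dQ/dP = (1+h)(1+h') satisfies dQ/dP = 1 + H with E[H | F_s] = 0 and E[H² | F_s] ≤ (δ₁δ₂ + δ₁ + δ₂)². -/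
/-!
Write `H = h + (1 + h) h'`, where `1 + h` is `F_t`-measurable. Conditioning on `F_t` kills the
term linear in `h'` and replaces `h'²` by `E[h'²|F_t] ≤ δ₂²`, so `E[H|F_t] = h` and
`E[H²|F_t] ≤ h² + δ₂² (1 + h)²`. Conditioning further on `F_s`, where `E[(1 + h)²|F_s] =
1 + E[h²|F_s]`, gives `E[H|F_s] = 0` and `E[H²|F_s] ≤ δ₁² + δ₂² (1 + δ₁²) ≤ (δ₁δ₂ + δ₁ + δ₂)²`.
The one analytic point is that `(1 + h) h'` is square integrable: truncating `(1 + h)²` and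
pulling it out of `E[· h'²|F_t]` bounds `∫ (1 + h)² h'²` by `δ₂² ∫ (1 + h)²`, and monotone
convergence removes the truncation.
-/

open MeasureTheory

namespace MeasureTheory

variable {Ω : Type*} {m m0 : MeasurableSpace Ω} {μ : Measure Ω}

lemma iSup_ofReal_min_natCast_mul {x y : ℝ} (hy : 0 ≤ y) :
    ⨆ n : ℕ, ENNReal.ofReal (min x n * y) = ENNReal.ofReal (x * y) :=
  le_antisymm
    (iSup_le fun _ => ENNReal.ofReal_le_ofReal (mul_le_mul_of_nonneg_right (min_le_left _ _) hy))
    (le_iSup_of_le ⌈x⌉₊ (by rw [min_eq_left (Nat.le_ceil x)]))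

lemma integral_mul_le_of_condExp_le_const (hm : m ≤ m0) [SigmaFinite (μ.trim hm)]
    {f g : Ω → ℝ} {c : ℝ} (hf : StronglyMeasurable[m] f) (hf0 : 0 ≤ f) (hfi : Integrable f μ)
    (hfg : Integrable (f * g) μ) (hgi : Integrable g μ) (hgc : μ[g | m] ≤ᵐ[μ] fun _ => c) :
    ∫ ω, (f * g) ω ∂μ ≤ c * ∫ ω, f ω ∂μ := by
  have hpull := condExp_mul_of_stronglyMeasurable_left hf hfg hgi
  calc ∫ ω, (f * g) ω ∂μ = ∫ ω, (f * μ[g | m]) ω ∂μ :=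
        (integral_condExp hm).symm.trans (integral_congr_ae hpull)
    _ ≤ ∫ ω, c * f ω ∂μ := by
        refine integral_mono_ae (integrable_condExp.congr hpull) (hfi.const_mul c) ?_
        filter_upwards [hgc] with ω hω
        rw [mul_comm c]
        exact mul_le_mul_of_nonneg_left hω (hf0 ω)
    _ = c * ∫ ω, f ω ∂μ := integral_const_mul _ _

lemma integrable_mul_of_condExp_le_const (hm : m ≤ m0) [SigmaFinite (μ.trim hm)]
    {f g : Ω → ℝ} {c : ℝ} (hf : StronglyMeasurable[m] f) (hf0 : 0 ≤ f) (hfi : Integrable f μ)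
    (hg0 : 0 ≤ g) (hgi : Integrable g μ) (hgc : μ[g | m] ≤ᵐ[μ] fun _ => c) :
    Integrable (f * g) μ := by
  set F : ℕ → Ω → ℝ := fun n ω => min (f ω) n
  have hF0 : ∀ n, 0 ≤ F n := fun n ω => le_min (hf0 ω) n.cast_nonneg
  have hFm : ∀ n, StronglyMeasurable[m] (F n) := fun n =>
    (hf.measurable.min measurable_const).stronglyMeasurable
  have hFi : ∀ n, Integrable (F n) μ := fun n =>
    hfi.mono ((hFm n).mono hm).aestronglyMeasurable <| ae_of_all _ fun ω => by
      simp only [Real.norm_eq_abs, abs_of_nonneg (hF0 n ω), abs_of_nonneg (hf0 ω)]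
      exact min_le_left _ _
  have hFg : ∀ n, Integrable (F n * g) μ := fun n =>
    hgi.bdd_mul (c := n) ((hFm n).mono hm).aestronglyMeasurable <| ae_of_all _ fun ω => by
      rw [Real.norm_eq_abs, abs_of_nonneg (hF0 n ω)]; exact min_le_right _ _
  have hbound : ∀ n, ∫ ω, (F n * g) ω ∂μ ≤ |c| * ∫ ω, f ω ∂μ := fun n =>
    calc ∫ ω, (F n * g) ω ∂μ ≤ c * ∫ ω, F n ω ∂μ :=
          integral_mul_le_of_condExp_le_const hm (hFm n) (hF0 n) (hFi n) (hFg n) hgi hgc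
      _ ≤ |c| * ∫ ω, F n ω ∂μ :=
          mul_le_mul_of_nonneg_right (le_abs_self c) (integral_nonneg (hF0 n))
      _ ≤ |c| * ∫ ω, f ω ∂μ := mul_le_mul_of_nonneg_left
          (integral_mono (hFi n) hfi fun ω => min_le_left _ _) (abs_nonneg c)
  refine ⟨(hf.mono hm).aestronglyMeasurable.mul hgi.1, ?_⟩
  rw [hasFiniteIntegral_iff_ofReal (f := f * g)
    (ae_of_all _ fun ω => mul_nonneg (hf0 ω) (hg0 ω))]
  calc ∫⁻ ω, ENNReal.ofReal ((f * g) ω) ∂μ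
      = ∫⁻ ω, ⨆ n, ENNReal.ofReal ((F n * g) ω) ∂μ :=
        lintegral_congr fun ω => (iSup_ofReal_min_natCast_mul (hg0 ω)).symm
    _ = ⨆ n, ∫⁻ ω, ENNReal.ofReal ((F n * g) ω) ∂μ :=
        lintegral_iSup' (fun n => (hFg n).aemeasurable.ennreal_ofReal) <| ae_of_all _
          fun ω _ _ hnk => ENNReal.ofReal_le_ofReal <| mul_le_mul_of_nonneg_right
            (min_le_min_left _ (Nat.cast_le.mpr hnk)) (hg0 ω)
    _ ≤ ENNReal.ofReal (|c| * ∫ ω, f ω ∂μ) := iSup_le fun n => by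
        rw [← ofReal_integral_eq_lintegral_ofReal (hFg n)
          (ae_of_all _ fun ω => mul_nonneg (hF0 n ω) (hg0 ω))]
        exact ENNReal.ofReal_le_ofReal (hbound n)
    _ < ⊤ := ENNReal.ofReal_lt_top

lemma memLp_two_mul_of_condExp_sq_le (hm : m ≤ m0) [SigmaFinite (μ.trim hm)] {a k : Ω → ℝ}
    {c : ℝ} (ha : StronglyMeasurable[m] a) (ha2 : MemLp a 2 μ) (hk2 : MemLp k 2 μ)
    (hkc : μ[fun ω => k ω ^ 2 | m] ≤ᵐ[μ] fun _ => c) :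
    MemLp (a * k) 2 μ := by
  refine (memLp_two_iff_integrable_sq (ha2.1.mul hk2.1)).2 ?_
  have := integrable_mul_of_condExp_le_const hm (f := fun ω => a ω ^ 2) (ha.pow 2)
    (fun ω => sq_nonneg (a ω)) ha2.integrable_sq (fun ω => sq_nonneg (k ω)) hk2.integrable_sq hkc
  exact this.congr (ae_of_all _ fun ω => (mul_pow (a ω) (k ω) 2).symm)

lemma condExp_add_mul_of_condExp_eq_zero (hm : m ≤ m0) [SigmaFinite (μ.trim hm)]
    {a b k : Ω → ℝ} (hb : StronglyMeasurable[m] b) (hbi : Integrable b μ)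
    (ha : StronglyMeasurable[m] a) (haki : Integrable (a * k) μ) (hki : Integrable k μ)
    (hk : μ[k | m] =ᵐ[μ] 0) :
    μ[b + a * k | m] =ᵐ[μ] b := by
  filter_upwards [condExp_add hbi haki m, condExp_mul_of_stronglyMeasurable_left ha haki hki, hk]
    with ω hadd hpull hω
  simp [hadd, hpull, hω, condExp_of_stronglyMeasurable hm hb hbi]

lemma condExp_sq_add_mul_of_condExp_eq_zero (hm : m ≤ m0) [SigmaFinite (μ.trim hm)]
    {a b k : Ω → ℝ} (hb : StronglyMeasurable[m] b) (hb2 : MemLp b 2 μ)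
    (ha : StronglyMeasurable[m] a) (hak : MemLp (a * k) 2 μ) (hki : Integrable k μ)
    (hk2 : Integrable (fun ω => k ω ^ 2) μ) (hk : μ[k | m] =ᵐ[μ] 0) :
    μ[fun ω => (b ω + a ω * k ω) ^ 2 | m]
      =ᵐ[μ] fun ω => b ω ^ 2 + a ω ^ 2 * μ[fun ω => k ω ^ 2 | m] ω := by
  set b2 : Ω → ℝ := fun ω => b ω ^ 2
  set a2 : Ω → ℝ := fun ω => a ω ^ 2
  set k2 : Ω → ℝ := fun ω => k ω ^ 2
  set cross : Ω → ℝ := fun ω => 2 * b ω * a ω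
  have hsplit : (fun ω => (b ω + a ω * k ω) ^ 2) = (b2 + cross * k) + a2 * k2 := by
    funext ω; simp only [b2, a2, k2, cross, Pi.add_apply, Pi.mul_apply]; ring
  have hcross : Integrable (cross * k) μ := by
    refine ((hb2.integrable_mul hak).const_mul 2).congr (ae_of_all _ fun ω => ?_)
    simp only [cross, Pi.mul_apply]; ring
  have hsq : Integrable (a2 * k2) μ :=
    hak.integrable_sq.congr (ae_of_all _ fun ω => mul_pow (a ω) (k ω) 2)
  have hlin : μ[b2 + cross * k | m] =ᵐ[μ] b2 :=
    condExp_add_mul_of_condExp_eq_zero hm (hb.pow 2) hb2.integrable_sq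
      ((stronglyMeasurable_const.mul hb).mul ha) hcross hki hk
  have hpull : μ[a2 * k2 | m] =ᵐ[μ] a2 * μ[k2 | m] :=
    condExp_mul_of_stronglyMeasurable_left (ha.pow 2) hsq hk2
  rw [hsplit]
  filter_upwards [condExp_add (hb2.integrable_sq.add hcross) hsq m, hlin, hpull]
    with ω hadd hlinω hpullω
  rw [hadd, Pi.add_apply, hlinω, hpullω, Pi.mul_apply]

lemma condExp_sq_add_mul_sq_one_add_le (hm : m ≤ m0) [IsFiniteMeasure μ] {h : Ω → ℝ}
    {c δ : ℝ} (hc : 0 ≤ c) (hh2 : MemLp h 2 μ) (hce : μ[h | m] =ᵐ[μ] 0)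
    (hvar : μ[fun ω => h ω ^ 2 | m] ≤ᵐ[μ] fun _ => δ ^ 2) :
    μ[fun ω => h ω ^ 2 + c * (1 + h ω) ^ 2 | m] ≤ᵐ[μ] fun _ => δ ^ 2 + c * (1 + δ ^ 2) := by
  have hone : μ[fun ω => (1 + h ω) ^ 2 | m] =ᵐ[μ] fun ω => 1 + μ[fun ω => h ω ^ 2 | m] ω := by
    have := condExp_sq_add_mul_of_condExp_eq_zero hm (a := 1) (b := 1)
      stronglyMeasurable_one (memLp_const 1) stronglyMeasurable_one (by rwa [one_mul])
      (hh2.integrable one_le_two) hh2.integrable_sq hce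
    simpa only [Pi.one_apply, one_mul, one_pow] using this
  have hint : Integrable (fun ω => c * (1 + h ω) ^ 2) μ := by
    have h1 : MemLp (fun ω => 1 + h ω) 2 μ := (memLp_const (1 : ℝ)).add hh2
    exact h1.integrable_sq.const_mul c
  have hadd : μ[fun ω => h ω ^ 2 + c * (1 + h ω) ^ 2 | m] =ᵐ[μ]
      μ[fun ω => h ω ^ 2 | m] + μ[fun ω => c * (1 + h ω) ^ 2 | m] :=
    condExp_add hh2.integrable_sq hint m
  have hsmul : μ[fun ω => c * (1 + h ω) ^ 2 | m] =ᵐ[μ]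
      fun ω => c * μ[fun ω => (1 + h ω) ^ 2 | m] ω :=
    condExp_smul c (fun ω => (1 + h ω) ^ 2) m
  filter_upwards [hadd, hsmul, hone, hvar] with ω haddω hsmulω honeω hω
  rw [haddω, Pi.add_apply, hsmulω, honeω]
  have := mul_le_mul_of_nonneg_left (add_le_add_left hω 1) hc
  linarith

end MeasureTheory

theorem stmt10_general {Ω : Type*} {m0 : MeasurableSpace Ω} (P : Measure Ω) [IsProbabilityMeasure P]
    (ms mt mu : MeasurableSpace Ω) (hst : ms ≤ mt) (htu : mt ≤ mu) (hu : mu ≤ m0)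
    (h h' : Ω → ℝ) (hhm : Measurable[mt] h)
    (hh2 : MemLp h 2 P) (hh'2 : MemLp h' 2 P)
    (δ₁ δ₂ : ℝ) (hδ₁ : 0 ≤ δ₁) (hδ₂ : 0 ≤ δ₂)
    (hce1 : P[h | ms] =ᵐ[P] 0)
    (hvar1 : P[fun ω => h ω ^ 2 | ms] ≤ᵐ[P] fun _ => δ₁ ^ 2)
    (hce2 : P[h' | mt] =ᵐ[P] 0)
    (hvar2 : P[fun ω => h' ω ^ 2 | mt] ≤ᵐ[P] fun _ => δ₂ ^ 2)
    (H : Ω → ℝ) (hH : H = fun ω => h ω + h' ω + h ω * h' ω) :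
    (∀ ω, (1 + h ω) * (1 + h' ω) = 1 + H ω) ∧
    P[H | ms] =ᵐ[P] 0 ∧
    P[fun ω => H ω ^ 2 | ms] ≤ᵐ[P] fun _ => (δ₁ * δ₂ + δ₁ + δ₂) ^ 2 := by
  have hmt : mt ≤ m0 := htu.trans hu
  have hHeq : H = h + (1 + h) * h' := by
    rw [hH]; funext ω; simp only [Pi.add_apply, Pi.mul_apply, Pi.one_apply]; ring
  have hm1 : StronglyMeasurable[mt] (1 + h) := stronglyMeasurable_one.add hhm.stronglyMeasurable
  have hmem : MemLp ((1 + h) * h') 2 P :=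
    memLp_two_mul_of_condExp_sq_le hmt hm1 ((memLp_const (1 : ℝ)).add hh2) hh'2 hvar2
  have hHt : P[H | mt] =ᵐ[P] h := by
    rw [hHeq]
    exact condExp_add_mul_of_condExp_eq_zero hmt hhm.stronglyMeasurable
      (hh2.integrable one_le_two) hm1 (hmem.integrable one_le_two)
      (hh'2.integrable one_le_two) hce2
  have hH2t : P[fun ω => H ω ^ 2 | mt] ≤ᵐ[P] fun ω => h ω ^ 2 + δ₂ ^ 2 * (1 + h ω) ^ 2 := by
    have hpyth := condExp_sq_add_mul_of_condExp_eq_zero hmt hhm.stronglyMeasurable hh2 hm1 hmem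
      (hh'2.integrable one_le_two) hh'2.integrable_sq hce2
    rw [hHeq]
    filter_upwards [hpyth, hvar2] with ω hω hvarω
    refine hω.trans_le ?_
    simp only [Pi.add_apply, Pi.one_apply]
    nlinarith [mul_le_mul_of_nonneg_left hvarω (sq_nonneg (1 + h ω))]
  have hint : Integrable (fun ω => h ω ^ 2 + δ₂ ^ 2 * (1 + h ω) ^ 2) P :=
    hh2.integrable_sq.add (((memLp_const (1 : ℝ)).add hh2).integrable_sq.const_mul _)
  refine ⟨fun ω => by rw [hH]; ring, ?_, ?_⟩
  · exact (condExp_condExp_of_le hst hmt).symm.trans ((condExp_congr_ae hHt).trans hce1)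
  · filter_upwards [(condExp_condExp_of_le (f := fun ω => H ω ^ 2) hst hmt).symm,
      condExp_mono (m := ms) integrable_condExp hint hH2t,
      condExp_sq_add_mul_sq_one_add_le (hst.trans hmt) (sq_nonneg δ₂) hh2 hce1 hvar1]
      with ω htower hmono hbound
    rw [htower]
    calc _ ≤ _ := hmono
      _ ≤ _ := hbound
      _ ≤ (δ₁ * δ₂ + δ₁ + δ₂) ^ 2 := by
        nlinarith [mul_nonneg hδ₁ hδ₂, mul_nonneg (mul_nonneg hδ₁ hδ₂) (add_nonneg hδ₁ hδ₂)]

/-- pasting of no-good-deal densities. If `dQ₁/dP = 1 + h` with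
`E[h|F_s] = 0`, `E[h²|F_s] ≤ δ₁²` and the `F_t`-density of `Q₂` is `1 + h'`
with `E[h'|F_t] = 0`, `E[h'²|F_t] ≤ δ₂²`, then the pasted density
`(1+h)(1+h') = 1 + H` satisfies `E[H|F_s] = 0` and
`E[H²|F_s] ≤ (δ₁δ₂ + δ₁ + δ₂)²`. -/
theorem stmt10 {Ω : Type*} {m0 : MeasurableSpace Ω} (P : Measure Ω) [IsProbabilityMeasure P]
    (ms mt mu : MeasurableSpace Ω) (hst : ms ≤ mt) (htu : mt ≤ mu) (hu : mu ≤ m0)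
    (h h' : Ω → ℝ) (hhm : Measurable[mt] h) (hh'm : Measurable[mu] h')
    (hh2 : MemLp h 2 P) (hh'2 : MemLp h' 2 P)
    (δ₁ δ₂ : ℝ) (hδ₁ : 0 ≤ δ₁) (hδ₂ : 0 ≤ δ₂)
    (hce1 : P[h | ms] =ᵐ[P] 0)
    (hvar1 : P[fun ω => h ω ^ 2 | ms] ≤ᵐ[P] fun _ => δ₁ ^ 2)
    (hce2 : P[h' | mt] =ᵐ[P] 0)
    (hvar2 : P[fun ω => h' ω ^ 2 | mt] ≤ᵐ[P] fun _ => δ₂ ^ 2)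
    (H : Ω → ℝ) (hH : H = fun ω => h ω + h' ω + h ω * h' ω) :
    (∀ ω, (1 + h ω) * (1 + h' ω) = 1 + H ω) ∧
    P[H | ms] =ᵐ[P] 0 ∧
    P[fun ω => H ω ^ 2 | ms] ≤ᵐ[P] fun _ => (δ₁ * δ₂ + δ₁ + δ₂) ^ 2 :=
  stmt10_general P ms mt mu hst htu hu h h' hhm hh2 hh'2 δ₁ δ₂ hδ₁ hδ₂ hce1 hvar1 hce2 hvar2 H hH
end

section
/- Let ρ_{st} : L^p(F_t) → L^p(F_s), p < ∞, be a convex risk measure (convex, monotone, F_s-translation invariant) that is continuous from below and continuous from above. Let C ⊆ L^p(F_t) be a set of random variables each bounded from below such that C is closed under g ↦ max(g, −n) and g ↦ min(g, n) stays dominated by elements of C. Then for every X ∈ L^p(F_t), essinf_{g ∈ C} ρ_{st}(g − X) = essinf_{g ∈ C ∩ L^∞(F_t)} ρ_{st}(g − X). -/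
open MeasureTheory Filter
open scoped ENNReal

/-!
Every `ρ(g - X)` with `g ∈ C` bounds `EIC` from above, in particular for bounded `g`, so
`EIC ≤ EIB`. Conversely, for `g ∈ C` the truncations `min g n` lie in `C` and are bounded,
because `g` is bounded from below; they increase to `g`, so continuity from below gives
`ρ(min g n - X) → ρ(g - X)` a.s., and `EIB ≤ ρ(min g n - X)` passes to the limit.
-/

lemma abs_min_le_max_abs {M a b : ℝ} (hM : M ≤ a) (hb : 0 ≤ b) : |min a b| ≤ max |M| b := by
  rw [abs_le]
  constructor
  · calc -max |M| b ≤ min M b := by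
          rw [le_min_iff]
          constructor
          · linarith [neg_abs_le M, le_max_left |M| b]
          · linarith [le_max_right |M| b]
      _ ≤ min a b := min_le_min_right b hM
  · exact (min_le_right a b).trans (le_max_right _ _)

lemma monotone_min_natCast (a : ℝ) : Monotone fun n : ℕ => min a n :=
  fun _ _ hmn => min_le_min_left a (by exact_mod_cast hmn)

lemma tendsto_min_natCast (a : ℝ) : Tendsto (fun n : ℕ => min a n) atTop (nhds a) :=
  tendsto_atTop_of_eventually_const (i₀ := ⌈a⌉₊) fun n hn =>
    min_eq_left ((Nat.le_ceil a).trans (by exact_mod_cast hn))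

section Measure

variable {Ω : Type*} {m0 : MeasurableSpace Ω} {P : Measure Ω}

lemma ae_le_of_ae_le_of_ae_tendsto {Z G : Ω → ℝ} {F : ℕ → Ω → ℝ}
    (hle : ∀ n, ∀ᵐ ω ∂P, Z ω ≤ F n ω)
    (hlim : ∀ᵐ ω ∂P, Tendsto (fun n => F n ω) atTop (nhds (G ω))) :
    ∀ᵐ ω ∂P, Z ω ≤ G ω := by
  filter_upwards [ae_all_iff.mpr hle, hlim] with ω hleω hlimω
  exact ge_of_tendsto' hlimω hleω

lemma ae_abs_min_natCast_le {g : Ω → ℝ} (hg : ∃ M : ℝ, ∀ᵐ ω ∂P, M ≤ g ω) (n : ℕ) :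
    ∃ Cb : ℝ, ∀ᵐ ω ∂P, |min (g ω) n| ≤ Cb := by
  obtain ⟨M, hM⟩ := hg
  exact ⟨max |M| n, hM.mono fun ω hMω => abs_min_le_max_abs hMω n.cast_nonneg⟩

lemma ae_tendsto_risk_min_natCast_sub {p : ℝ≥0∞} {ρ : (Ω → ℝ) → (Ω → ℝ)}
    (hcontb : ∀ (Xn : ℕ → Ω → ℝ) (X : Ω → ℝ), (∀ n, MemLp (Xn n) p P) → MemLp X p P →
      (∀ᵐ ω ∂P, Monotone fun n => Xn n ω) →
      (∀ᵐ ω ∂P, Tendsto (fun n => Xn n ω) atTop (nhds (X ω))) →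
      ∀ᵐ ω ∂P, Tendsto (fun n => ρ (Xn n) ω) atTop (nhds (ρ X ω)))
    {g X : Ω → ℝ} (hgn : ∀ n : ℕ, MemLp (fun ω => min (g ω) n) p P) (hg : MemLp g p P)
    (hX : MemLp X p P) :
    ∀ᵐ ω ∂P, Tendsto (fun n : ℕ => ρ (fun ω' => min (g ω') n - X ω') ω) atTop
      (nhds (ρ (fun ω' => g ω' - X ω') ω)) :=
  hcontb _ _ (fun n => (hgn n).sub hX) (hg.sub hX)
    (ae_of_all _ fun ω _ _ hmn => sub_le_sub_right (monotone_min_natCast (g ω) hmn) (X ω))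
    (ae_of_all _ fun ω => (tendsto_min_natCast (g ω)).sub_const (X ω))

end Measure

theorem stmt16_general {Ω : Type*} {m0 : MeasurableSpace Ω} (P : Measure Ω)
    (p : ℝ≥0∞)
    (ρ : (Ω → ℝ) → (Ω → ℝ))
    (hcontb : ∀ (Xn : ℕ → Ω → ℝ) (X : Ω → ℝ), (∀ n, MemLp (Xn n) p P) → MemLp X p P →
      (∀ᵐ ω ∂P, Monotone fun n => Xn n ω) →
      (∀ᵐ ω ∂P, Tendsto (fun n => Xn n ω) atTop (nhds (X ω))) →
      ∀ᵐ ω ∂P, Tendsto (fun n => ρ (Xn n) ω) atTop (nhds (ρ X ω)))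
    (C : Set (Ω → ℝ))
    (hCsub : ∀ g ∈ C, MemLp g p P)
    (hCbdd : ∀ g ∈ C, ∃ M : ℝ, ∀ᵐ ω ∂P, M ≤ g ω)
    (hCmin : ∀ g ∈ C, ∀ n : ℕ, (fun ω => min (g ω) (n : ℝ)) ∈ C)
    (X : Ω → ℝ) (hX : MemLp X p P)
    -- `EIC` is the essential infimum of `ρ(g - X)` over `g ∈ C`
    (EIC : Ω → ℝ)
    (hEIC_lb : ∀ g ∈ C, ∀ᵐ ω ∂P, EIC ω ≤ ρ (fun ω' => g ω' - X ω') ω)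
    (hEIC_max : ∀ Z : Ω → ℝ,
      (∀ g ∈ C, ∀ᵐ ω ∂P, Z ω ≤ ρ (fun ω' => g ω' - X ω') ω) → ∀ᵐ ω ∂P, Z ω ≤ EIC ω)
    -- `EIB` is the essential infimum of `ρ(g - X)` over bounded `g ∈ C`
    (EIB : Ω → ℝ)
    (hEIB_lb : ∀ g ∈ C, (∃ Cb : ℝ, ∀ᵐ ω ∂P, |g ω| ≤ Cb) →
      ∀ᵐ ω ∂P, EIB ω ≤ ρ (fun ω' => g ω' - X ω') ω)
    (hEIB_max : ∀ Z : Ω → ℝ,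
      (∀ g ∈ C, (∃ Cb : ℝ, ∀ᵐ ω ∂P, |g ω| ≤ Cb) →
        ∀ᵐ ω ∂P, Z ω ≤ ρ (fun ω' => g ω' - X ω') ω) → ∀ᵐ ω ∂P, Z ω ≤ EIB ω) :
    EIC =ᵐ[P] EIB := by
  have hCB : ∀ᵐ ω ∂P, EIC ω ≤ EIB ω := hEIB_max EIC fun g hg _ => hEIC_lb g hg
  have hBC : ∀ᵐ ω ∂P, EIB ω ≤ EIC ω := by
    refine hEIC_max EIB fun g hg => ?_
    have hgn : ∀ n : ℕ, (fun ω => min (g ω) (n : ℝ)) ∈ C := hCmin g hg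
    exact ae_le_of_ae_le_of_ae_tendsto
      (fun n => hEIB_lb _ (hgn n) (ae_abs_min_natCast_le (hCbdd g hg) n))
      (ae_tendsto_risk_min_natCast_sub hcontb (fun n => hCsub _ (hgn n)) (hCsub g hg) hX)
  filter_upwards [hCB, hBC] with ω hCBω hBCω
  exact le_antisymm hCBω hBCω

/-- for a convex risk measure `ρ_{st}` on `L^p`, continuous from
below and above, and a set `C` of claims bounded from below, closed under
truncation from below and above, the essential infimum of `ρ_{st}(g - X)` over
`g ∈ C` coincides with the essential infimum over `g ∈ C ∩ L^∞`. Essential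
infima are characterised as greatest a.s. lower bounds. -/
theorem stmt16 {Ω : Type*} {m0 : MeasurableSpace Ω} (P : Measure Ω) [IsProbabilityMeasure P]
    (ms mt : MeasurableSpace Ω) (hst : ms ≤ mt) (ht : mt ≤ m0)
    (p : ℝ≥0∞) (hp : 1 ≤ p) (hp' : p ≠ ∞)
    (ρ : (Ω → ℝ) → (Ω → ℝ))
    (hconv : ∀ (X Y : Ω → ℝ) (l : ℝ), MemLp X p P → MemLp Y p P → 0 ≤ l → l ≤ 1 →
      ∀ᵐ ω ∂P, ρ (fun ω' => l * X ω' + (1 - l) * Y ω') ω ≤ l * ρ X ω + (1 - l) * ρ Y ω)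
    (hmono : ∀ X Y : Ω → ℝ, MemLp X p P → MemLp Y p P →
      (∀ᵐ ω ∂P, Y ω ≤ X ω) → ∀ᵐ ω ∂P, ρ X ω ≤ ρ Y ω)
    (htrans : ∀ X f : Ω → ℝ, MemLp X p P → MemLp f p P → Measurable[ms] f →
      ρ (X + f) =ᵐ[P] ρ X - f)
    (hcontb : ∀ (Xn : ℕ → Ω → ℝ) (X : Ω → ℝ), (∀ n, MemLp (Xn n) p P) → MemLp X p P →
      (∀ᵐ ω ∂P, Monotone fun n => Xn n ω) →
      (∀ᵐ ω ∂P, Tendsto (fun n => Xn n ω) atTop (nhds (X ω))) →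
      ∀ᵐ ω ∂P, Tendsto (fun n => ρ (Xn n) ω) atTop (nhds (ρ X ω)))
    (hconta : ∀ (Xn : ℕ → Ω → ℝ) (X : Ω → ℝ), (∀ n, MemLp (Xn n) p P) → MemLp X p P →
      (∀ᵐ ω ∂P, Antitone fun n => Xn n ω) →
      (∀ᵐ ω ∂P, Tendsto (fun n => Xn n ω) atTop (nhds (X ω))) →
      ∀ᵐ ω ∂P, Tendsto (fun n => ρ (Xn n) ω) atTop (nhds (ρ X ω)))
    (C : Set (Ω → ℝ)) (hCne : C.Nonempty)
    (hCsub : ∀ g ∈ C, MemLp g p P)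
    (hCbdd : ∀ g ∈ C, ∃ M : ℝ, ∀ᵐ ω ∂P, M ≤ g ω)
    (hCmax : ∀ g ∈ C, ∀ n : ℕ, (fun ω => max (g ω) (-(n : ℝ))) ∈ C)
    (hCmin : ∀ g ∈ C, ∀ n : ℕ, (fun ω => min (g ω) (n : ℝ)) ∈ C)
    (X : Ω → ℝ) (hX : MemLp X p P)
    -- `EIC` is the essential infimum of `ρ(g - X)` over `g ∈ C`
    (EIC : Ω → ℝ)
    (hEIC_lb : ∀ g ∈ C, ∀ᵐ ω ∂P, EIC ω ≤ ρ (fun ω' => g ω' - X ω') ω)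
    (hEIC_max : ∀ Z : Ω → ℝ,
      (∀ g ∈ C, ∀ᵐ ω ∂P, Z ω ≤ ρ (fun ω' => g ω' - X ω') ω) → ∀ᵐ ω ∂P, Z ω ≤ EIC ω)
    -- `EIB` is the essential infimum of `ρ(g - X)` over bounded `g ∈ C`
    (EIB : Ω → ℝ)
    (hEIB_lb : ∀ g ∈ C, (∃ Cb : ℝ, ∀ᵐ ω ∂P, |g ω| ≤ Cb) →
      ∀ᵐ ω ∂P, EIB ω ≤ ρ (fun ω' => g ω' - X ω') ω)
    (hEIB_max : ∀ Z : Ω → ℝ,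
      (∀ g ∈ C, (∃ Cb : ℝ, ∀ᵐ ω ∂P, |g ω| ≤ Cb) →
        ∀ᵐ ω ∂P, Z ω ≤ ρ (fun ω' => g ω' - X ω') ω) → ∀ᵐ ω ∂P, Z ω ≤ EIB ω) :
    EIC =ᵐ[P] EIB :=
  stmt16_general (m0 := m0) P p ρ hcontb C hCsub hCbdd hCmin X hX EIC hEIC_lb hEIC_max EIB hEIB_lb
    hEIB_max
end

section
/- Let ρ : L^p(F_T) → ℝ, p ∈ [1,∞), be a convex risk measure with minimal penalty α(Q) := sup_{X ∈ L^p}(E_Q[−X] − ρ(X)) admitting the representation ρ(X) = sup_{Q ∈ 𝒬}(E_Q[−X] − α(Q)) over 𝒬 := {Q ∼ P : α(Q) < ∞}. If in addition ρ(X) ≤ K‖X‖_p + C for all X, then every Q ∈ 𝒬 satisfies E_Q[X] ≤ K‖X‖_p for all X ∈ L^p(F_T), i.e. 𝒬 ⊆ {Q ≪ P : dQ/dP ∈ L^q, ‖dQ/dP‖_q ≤ K} with q = p/(p−1). -/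
open MeasureTheory Filter Topology
open scoped ENNReal NNReal

/-!
Testing the penalty bound `E_Q[-Y] - ρ(Y) ≤ α(Q)` on `Y = -c X` and using the growth bound
`ρ(-c X) ≤ c K ‖X‖_p + C` gives `c E_Q[X] ≤ c K ‖X‖_p + α(Q) + C` for every `c > 0`, hence
`E_Q[X] ≤ K ‖X‖_p`. The bound on `dQ/dP` is then a converse Hölder inequality: for `p = 1` test
against indicators, and for `p > 1` test against `W_n ^ (q - 1)` with `W_n = min (dQ/dP) n`,
which yields `‖W_n‖_q ≤ K`, and let `n → ∞` by monotone convergence.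
-/

lemma le_of_forall_pos_mul_le_mul_add_s19 {x y b : ℝ} (h : ∀ c : ℝ, 0 < c → c * x ≤ c * y + b) :
    x ≤ y := by
  by_contra! hxy
  have hc := h ((|b| + 1) / (x - y)) (by have := sub_pos.2 hxy; positivity)
  have : (|b| + 1) / (x - y) * (x - y) = |b| + 1 := div_mul_cancel₀ _ (sub_pos.2 hxy).ne'
  nlinarith [le_abs_self b]

lemma ENNReal.rpow_le_of_le_mul_rpow_one_sub {S K : ℝ≥0∞} {a : ℝ} (ha : 0 < a) (hS : S ≠ ∞)
    (h : S ≤ K * S ^ (1 - a)) : S ^ a ≤ K := by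
  rcases eq_or_ne S 0 with rfl | hS0
  · simp [ENNReal.zero_rpow_of_pos ha]
  calc S ^ a = S ^ (1 : ℝ) * S ^ (a - 1) := by
        rw [← ENNReal.rpow_add _ _ hS0 hS]; ring_nf
    _ ≤ K * S ^ (1 - a) * S ^ (a - 1) := by rw [ENNReal.rpow_one]; gcongr
    _ = K := by rw [mul_assoc, ← ENNReal.rpow_add _ _ hS0 hS]; simp

namespace MeasureTheory

variable {Ω : Type*} {m0 : MeasurableSpace Ω} {μ : Measure Ω} {W : Ω → ℝ≥0∞} {K p q : ℝ≥0∞}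

lemma ae_le_of_forall_lintegral_mul_le_eLpNorm_one [SigmaFinite μ] (hW : Measurable W)
    (H : ∀ g : Ω → ℝ≥0∞, Measurable g → (∃ c : ℝ≥0, ∀ ω, g ω ≤ c) →
      ∫⁻ ω, W ω * g ω ∂μ ≤ K * eLpNorm g 1 μ) :
    W ≤ᵐ[μ] fun _ => K := by
  refine ae_le_of_forall_setLIntegral_le_of_sigmaFinite hW fun s hs _ => ?_
  have hind := H (s.indicator 1) (measurable_one.indicator hs)
    ⟨1, fun ω => by by_cases h : ω ∈ s <;> simp [h]⟩
  calc ∫⁻ ω in s, W ω ∂μ = ∫⁻ ω, W ω * s.indicator 1 ω ∂μ := by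
        rw [← lintegral_indicator hs]
        congr 1; ext ω; by_cases h : ω ∈ s <;> simp [h]
    _ ≤ K * μ s := by
        simpa [eLpNorm_one_eq_lintegral_enorm, lintegral_indicator hs] using hind
    _ = ∫⁻ _ in s, K ∂μ := by rw [setLIntegral_const, mul_comm]

lemma lintegral_min_natCast_rpow_le [IsFiniteMeasure μ] [p.HolderConjugate q] (hp : p ≠ ∞)
    (hq : q ≠ ∞) (hW : Measurable W)
    (H : ∀ g : Ω → ℝ≥0∞, Measurable g → (∃ c : ℝ≥0, ∀ ω, g ω ≤ c) →
      ∫⁻ ω, W ω * g ω ∂μ ≤ K * eLpNorm g p μ) (n : ℕ) :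
    ∫⁻ ω, min (W ω) n ^ q.toReal ∂μ ≤ K ^ q.toReal := by
  have hpq : q.toReal.HolderConjugate p.toReal := ENNReal.HolderConjugate.toReal_of_ne_top hq hp
  set r := q.toReal
  set S := ∫⁻ ω, min (W ω) n ^ r ∂μ
  have hS : S ≠ ∞ := by
    refine ne_top_of_le_ne_top (b := ∫⁻ _, (n : ℝ≥0∞) ^ r ∂μ) ?_
      (lintegral_mono fun ω => ENNReal.rpow_le_rpow (min_le_right _ _) hpq.nonneg)
    simp [lintegral_const, ENNReal.mul_eq_top, hpq.nonneg]
  have hr1 : 0 ≤ r - 1 := sub_nonneg.2 hpq.lt.le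
  -- test against `g = (min W n) ^ (r - 1)`, whose `p`-th power is `(min W n) ^ r`
  have hg := H (fun ω => min (W ω) n ^ (r - 1))
    ((hW.min measurable_const).pow_const _)
    ⟨(n : ℝ≥0) ^ (r - 1), fun ω => by
      rw [ENNReal.coe_rpow_of_nonneg _ hr1]
      exact ENNReal.rpow_le_rpow (min_le_right _ _) hr1⟩
  have hnorm : eLpNorm (fun ω => min (W ω) n ^ (r - 1)) p μ = S ^ (1 - r⁻¹) := by
    rw [eLpNorm_eq_lintegral_rpow_enorm_toReal (ENNReal.HolderConjugate.ne_zero p q) hp,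
      hpq.one_sub_inv, one_div]
    simp_rw [enorm_eq_self, ← ENNReal.rpow_mul, hpq.sub_one_mul_conj, S]
  have hSle : S ≤ K * S ^ (1 - r⁻¹) :=
    calc S ≤ ∫⁻ ω, W ω * min (W ω) n ^ (r - 1) ∂μ := lintegral_mono fun ω => by
          calc min (W ω) n ^ r = min (W ω) n ^ (1 : ℝ) * min (W ω) n ^ (r - 1) := by
                rw [← ENNReal.rpow_add_of_nonneg _ _ zero_le_one hr1]; ring_nf
            _ ≤ W ω * min (W ω) n ^ (r - 1) := by
                rw [ENNReal.rpow_one]; gcongr; exact min_le_left _ _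
      _ ≤ K * S ^ (1 - r⁻¹) := hnorm ▸ hg
  calc S = (S ^ r⁻¹) ^ r := by
        rw [← ENNReal.rpow_mul, inv_mul_cancel₀ hpq.pos.ne', ENNReal.rpow_one]
    _ ≤ K ^ r := by
        gcongr
        exact ENNReal.rpow_le_of_le_mul_rpow_one_sub (inv_pos.2 hpq.pos) hS hSle

theorem eLpNorm_le_of_forall_lintegral_mul_le [IsFiniteMeasure μ] [p.HolderConjugate q]
    (hp : p ≠ ∞) (hW : Measurable W)
    (H : ∀ g : Ω → ℝ≥0∞, Measurable g → (∃ c : ℝ≥0, ∀ ω, g ω ≤ c) →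
      ∫⁻ ω, W ω * g ω ∂μ ≤ K * eLpNorm g p μ) :
    eLpNorm W q μ ≤ K := by
  by_cases hp1 : p = 1
  · obtain rfl : q = ∞ := (ENNReal.HolderConjugate.eq_top_iff_eq_one q p).2 hp1
    subst hp1
    rw [eLpNorm_exponent_top, eLpNormEssSup]
    exact essSup_le_of_ae_le K (ae_le_of_forall_lintegral_mul_le_eLpNorm_one hW H)
  have hq : q ≠ ∞ := (ENNReal.HolderConjugate.ne_top_iff_ne_one q p).2 hp1
  have hr : 0 < q.toReal := ENNReal.toReal_pos (ENNReal.HolderConjugate.ne_zero q p) hq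
  have htrunc : Tendsto (fun n : ℕ => ∫⁻ ω, min (W ω) n ^ q.toReal ∂μ) atTop
      (𝓝 (∫⁻ ω, W ω ^ q.toReal ∂μ)) := by
    refine lintegral_tendsto_of_tendsto_of_monotone
      (fun n => ((hW.min measurable_const).pow_const _).aemeasurable)
      (ae_of_all _ fun ω m n hmn => ?_) (ae_of_all _ fun ω => ?_)
    · exact ENNReal.rpow_le_rpow (min_le_min_left _ (Nat.cast_le.2 hmn)) hr.le
    · have := (tendsto_const_nhds (x := W ω)).min ENNReal.tendsto_nat_nhds_top
      rw [min_top_right] at this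
      exact (ENNReal.continuous_rpow_const.tendsto _).comp this
  have hle := le_of_tendsto' htrunc (lintegral_min_natCast_rpow_le hp hq hW H)
  rw [eLpNorm_eq_lintegral_rpow_enorm_toReal (ENNReal.HolderConjugate.ne_zero q p) hq]
  simp_rw [enorm_eq_self]
  calc (∫⁻ ω, W ω ^ q.toReal ∂μ) ^ (1 / q.toReal) ≤ (K ^ q.toReal) ^ (1 / q.toReal) := by gcongr
    _ = K := by rw [← ENNReal.rpow_mul, mul_one_div_cancel hr.ne', ENNReal.rpow_one]

lemma lintegral_rnDeriv_mul_le_of_integral_le {P Q : Measure Ω} [IsFiniteMeasure P]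
    [IsFiniteMeasure Q] (hQP : Q ≪ P) {K : ℝ} (hK : 0 ≤ K)
    (hE : ∀ X : Ω → ℝ, MemLp X p P → ∫ ω, X ω ∂Q ≤ K * (eLpNorm X p P).toReal)
    {g : Ω → ℝ≥0∞} (hg : Measurable g) (hgb : ∃ c : ℝ≥0, ∀ ω, g ω ≤ c) :
    ∫⁻ ω, Q.rnDeriv P ω * g ω ∂P ≤ ENNReal.ofReal K * eLpNorm g p P := by
  obtain ⟨c, hc⟩ := hgb
  have hfin : ∀ ω, g ω ≠ ∞ := fun ω => ne_top_of_le_ne_top ENNReal.coe_ne_top (hc ω)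
  have hX : MemLp (fun ω => (g ω).toReal) p P :=
    MemLp.of_bound hg.ennreal_toReal.aestronglyMeasurable c (ae_of_all _ fun ω => by
      simpa using ENNReal.toReal_mono ENNReal.coe_ne_top (hc ω))
  have hnorm : eLpNorm (fun ω => (g ω).toReal) p P = eLpNorm g p P :=
    eLpNorm_congr_enorm_ae (ae_of_all _ fun ω => by simp [hfin ω])
  calc ∫⁻ ω, Q.rnDeriv P ω * g ω ∂P = ∫⁻ ω, g ω ∂Q := lintegral_rnDeriv_mul hQP hg.aemeasurable
    _ = ENNReal.ofReal (∫ ω, (g ω).toReal ∂Q) := by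
        rw [integral_toReal hg.aemeasurable (ae_of_all _ fun ω => (hfin ω).lt_top),
          ENNReal.ofReal_toReal
            (IsFiniteMeasure.lintegral_lt_top_of_bounded_to_ennreal Q ⟨c, hc⟩).ne]
    _ ≤ ENNReal.ofReal (K * (eLpNorm (fun ω => (g ω).toReal) p P).toReal) :=
        ENNReal.ofReal_le_ofReal (hE _ hX)
    _ = ENNReal.ofReal K * eLpNorm g p P := by
        rw [ENNReal.ofReal_mul hK, ENNReal.ofReal_toReal hX.eLpNorm_ne_top, hnorm]

lemma integral_le_mul_eLpNorm_of_bddAbove_penalty {P Q : Measure Ω} (ρ : (Ω → ℝ) → ℝ) {K C : ℝ}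
    (hgrowth : ∀ X : Ω → ℝ, MemLp X p P → ρ X ≤ K * (eLpNorm X p P).toReal + C)
    (hbdd : BddAbove (Set.range fun X : {X : Ω → ℝ // MemLp X p P} =>
      (∫ ω, -(X.1 ω) ∂Q) - ρ X.1))
    {X : Ω → ℝ} (hX : MemLp X p P) :
    ∫ ω, X ω ∂Q ≤ K * (eLpNorm X p P).toReal := by
  obtain ⟨a, ha⟩ := hbdd
  refine le_of_forall_pos_mul_le_mul_add_s19 (b := a + C) fun c hc => ?_
  have hcX : MemLp ((-c) • X) p P := hX.const_smul (-c)
  have hpen := ha ⟨⟨_, hcX⟩, rfl⟩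
  have hρ := hgrowth _ hcX
  simp only [Pi.smul_apply, smul_eq_mul, neg_mul, neg_neg, integral_const_mul] at hpen
  rw [eLpNorm_const_smul, ENNReal.toReal_mul, toReal_enorm, norm_neg, Real.norm_of_nonneg hc.le]
    at hρ
  linarith

end MeasureTheory

theorem stmt19_general {Ω : Type*} {m0 : MeasurableSpace Ω} (P : Measure Ω) [IsProbabilityMeasure P]
    (p q : ℝ≥0∞) (hp' : p ≠ ∞) (hpq : 1 / p + 1 / q = 1)
    (ρ : (Ω → ℝ) → ℝ)
    (K C : ℝ) (hK : 0 < K)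
    (hgrowth : ∀ X : Ω → ℝ, MemLp X p P → ρ X ≤ K * (eLpNorm X p P).toReal + C)
    -- the set 𝒬 of equivalent measures with finite minimal penalty
    (QQ : Set (Measure Ω))
    (hQQ : QQ = {Q | IsProbabilityMeasure Q ∧ Q ≪ P ∧ P ≪ Q ∧
      BddAbove (Set.range fun X : {X : Ω → ℝ // MemLp X p P} =>
        (∫ ω, -(X.1 ω) ∂Q) - ρ X.1)}) :
    ∀ Q ∈ QQ,
      (∀ X : Ω → ℝ, MemLp X p P → ∫ ω, X ω ∂Q ≤ K * (eLpNorm X p P).toReal) ∧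
      eLpNorm (fun ω => (Q.rnDeriv P ω).toReal) q P ≤ ENNReal.ofReal K := by
  intro Q hQ
  rw [hQQ] at hQ
  obtain ⟨hQprob, hQP, -, hbdd⟩ := hQ
  have hE : ∀ X : Ω → ℝ, MemLp X p P → ∫ ω, X ω ∂Q ≤ K * (eLpNorm X p P).toReal :=
    fun X hX => integral_le_mul_eLpNorm_of_bddAbove_penalty ρ hgrowth hbdd hX
  refine ⟨hE, ?_⟩
  have : p.HolderConjugate q := ENNReal.holderConjugate_iff.2 (by simpa only [one_div] using hpq)
  calc eLpNorm (fun ω => (Q.rnDeriv P ω).toReal) q P ≤ eLpNorm (Q.rnDeriv P) q P :=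
        eLpNorm_mono_enorm fun ω => by
          rw [Real.enorm_eq_ofReal ENNReal.toReal_nonneg]; exact ENNReal.ofReal_toReal_le
    _ ≤ ENNReal.ofReal K := eLpNorm_le_of_forall_lintegral_mul_le hp' (Q.measurable_rnDeriv P)
        fun g hg hgb => lintegral_rnDeriv_mul_le_of_integral_le hQP hK.le hE hg hgb

/-- let `ρ : L^p → ℝ` be a convex risk measure with minimal
penalty `pen` admitting the representation
`ρ(X) = sup_{Q ∈ 𝒬} (E_Q[-X] - pen(Q))` over `𝒬 = {Q ∼ P : pen(Q) < ∞}`.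
If moreover `ρ(X) ≤ K‖X‖_p + C`, then every `Q ∈ 𝒬` satisfies
`E_Q[X] ≤ K‖X‖_p` for all `X ∈ L^p`, i.e. `dQ/dP ∈ L^q` with
`‖dQ/dP‖_q ≤ K`. -/
theorem stmt19 {Ω : Type*} {m0 : MeasurableSpace Ω} (P : Measure Ω) [IsProbabilityMeasure P]
    (p q : ℝ≥0∞) (hp : 1 ≤ p) (hp' : p ≠ ∞) (hpq : 1 / p + 1 / q = 1)
    (ρ : (Ω → ℝ) → ℝ)
    (hconv : ∀ (X Y : Ω → ℝ) (l : ℝ), MemLp X p P → MemLp Y p P → 0 ≤ l → l ≤ 1 →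
      ρ (fun ω => l * X ω + (1 - l) * Y ω) ≤ l * ρ X + (1 - l) * ρ Y)
    (hmono : ∀ X Y : Ω → ℝ, MemLp X p P → MemLp Y p P →
      (∀ᵐ ω ∂P, Y ω ≤ X ω) → ρ X ≤ ρ Y)
    (htrans : ∀ (X : Ω → ℝ) (c : ℝ), MemLp X p P → ρ (fun ω => X ω + c) = ρ X - c)
    (K C : ℝ) (hK : 0 < K)
    (hgrowth : ∀ X : Ω → ℝ, MemLp X p P → ρ X ≤ K * (eLpNorm X p P).toReal + C)
    -- the minimal penalty
    (pen : Measure Ω → ℝ)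
    (hpen : ∀ Q : Measure Ω,
      pen Q = ⨆ X : {X : Ω → ℝ // MemLp X p P}, ((∫ ω, -(X.1 ω) ∂Q) - ρ X.1))
    -- the set 𝒬 of equivalent measures with finite minimal penalty
    (QQ : Set (Measure Ω))
    (hQQ : QQ = {Q | IsProbabilityMeasure Q ∧ Q ≪ P ∧ P ≪ Q ∧
      BddAbove (Set.range fun X : {X : Ω → ℝ // MemLp X p P} =>
        (∫ ω, -(X.1 ω) ∂Q) - ρ X.1)})
    -- the dual representation of ρ over 𝒬
    (hrep : ∀ X : Ω → ℝ, MemLp X p P →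
      ρ X = ⨆ Q : QQ, ((∫ ω, -(X ω) ∂(Q.1)) - pen Q.1)) :
    ∀ Q ∈ QQ,
      (∀ X : Ω → ℝ, MemLp X p P → ∫ ω, X ω ∂Q ≤ K * (eLpNorm X p P).toReal) ∧
      eLpNorm (fun ω => (Q.rnDeriv P ω).toReal) q P ≤ ENNReal.ofReal K :=
  stmt19_general (m0 := m0) P p q hp' hpq ρ K C hK hgrowth QQ hQQ
end
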